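/- arXiv:0908.3799 — 4 statements merged into one kernel-verified Lean document; each statement's English description precedes it below -/
import Mathlib

section
/- Every disc preserving Möbius transformation F can be written as F = R_{φ₁} ∘ C_r ∘ R_{φ₂} for some rotations R_{φ₁}, R_{φ₂} and contraction C_r; moreover, if F is not a rotation, then φ₁, φ₂ (mod 2π) and r are uniquely determined by F. -/
open Complex OnePoint Set Real

/-- The Möbius transformation of the extended complex plane with matrix
`[[a, b], [c, d]]`. -/
noncomputable def mobius (a b c d : ℂ) : OnePoint ℂ → OnePoint ℂ := fun z =>
  Option.rec (if c = 0 then (∞ : OnePoint ℂ) else ((a / c : ℂ) : OnePoint ℂ))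
    (fun w => if c * w + d = 0 then (∞ : OnePoint ℂ)
      else (((a * w + b) / (c * w + d) : ℂ) : OnePoint ℂ)) z

/-- The rotation `R_φ : z ↦ e^{iφ} z`. -/
noncomputable def rotationMT (φ : ℝ) : OnePoint ℂ → OnePoint ℂ :=
  mobius (Complex.exp (φ * Complex.I)) 0 0 1

/-- The contraction to 1, `C_r`, with matrix `(1/2)[[r+1/r, r-1/r], [r-1/r, r+1/r]]`. -/
noncomputable def contractionMT (r : ℝ) : OnePoint ℂ → OnePoint ℂ :=
  mobius (((1/2) * (r + 1/r) : ℝ) : ℂ) (((1/2) * (r - 1/r) : ℝ) : ℂ)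
    (((1/2) * (r - 1/r) : ℝ) : ℂ) (((1/2) * (r + 1/r) : ℝ) : ℂ)

lemma mobius_coe (a b c d w : ℂ) :
    mobius a b c d (w : OnePoint ℂ) =
      if c * w + d = 0 then ∞ else (((a * w + b) / (c * w + d) : ℂ) : OnePoint ℂ) := rfl

lemma mobius_infty (a b c d : ℂ) :
    mobius a b c d ∞ = if c = 0 then ∞ else ((a / c : ℂ) : OnePoint ℂ) := rfl

lemma rotation_coe (φ : ℝ) (w : ℂ) :
    rotationMT φ (w : OnePoint ℂ) = ((Complex.exp (φ * Complex.I) * w : ℂ) : OnePoint ℂ) := by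
  simp [rotationMT, mobius_coe]

lemma rotation_infty (φ : ℝ) : rotationMT φ ∞ = ∞ := by
  simp [rotationMT, mobius_infty]

lemma norm_exp_I (φ : ℝ) : ‖Complex.exp (φ * Complex.I)‖ = 1 := by
  exact Complex.norm_exp_ofReal_mul_I φ

lemma den_ne {A B : ℝ} (hB : 0 ≤ B) (hBA : B < A) (u : ℂ) (hu : ‖u‖ ≤ 1) :
    (B : ℂ) * u + (A : ℂ) ≠ 0 := by
  intro h0
  have h1 : (B : ℂ) * u = -(A : ℂ) := by linear_combination h0
  have h2 : ‖(B : ℂ) * u‖ = ‖-(A : ℂ)‖ := by rw [h1]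
  rw [norm_mul, norm_neg, Complex.norm_real, Complex.norm_real,
    Real.norm_of_nonneg hB, Real.norm_of_nonneg (le_of_lt (lt_of_le_of_lt hB hBA))] at h2
  nlinarith [norm_nonneg u]

lemma r_facts {r : ℝ} (hr : 1 ≤ r) :
    0 ≤ (1/2) * (r - 1/r) ∧ (1/2) * (r - 1/r) < (1/2) * (r + 1/r) := by
  have hr0 : 0 < r := lt_of_lt_of_le one_pos hr
  have h1 : 0 < 1/r := by positivity
  have h2 : 1/r ≤ r := by rw [div_le_iff₀ hr0]; nlinarith
  constructor <;> nlinarith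

lemma comp_eval (φ₁ φ₂ r : ℝ) (hr : 1 ≤ r) (w : ℂ) (hw : ‖w‖ ≤ 1) :
    (rotationMT φ₁ ∘ contractionMT r ∘ rotationMT φ₂) (w : OnePoint ℂ) =
      ((Complex.exp (φ₁ * Complex.I) *
        (((((1/2) * (r + 1/r) : ℝ)) : ℂ) * (Complex.exp (φ₂ * Complex.I) * w)
            + ((((1/2) * (r - 1/r) : ℝ)) : ℂ)) /
        (((((1/2) * (r - 1/r) : ℝ)) : ℂ) * (Complex.exp (φ₂ * Complex.I) * w)
            + ((((1/2) * (r + 1/r) : ℝ)) : ℂ)) : ℂ) : OnePoint ℂ) := by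
  obtain ⟨hb, hba⟩ := r_facts hr
  have hwn : ‖Complex.exp (φ₂ * Complex.I) * w‖ ≤ 1 := by
    rw [norm_mul, norm_exp_I, one_mul]; exact hw
  have hden := den_ne hb hba _ hwn
  simp only [Function.comp_apply, rotation_coe]
  rw [contractionMT, mobius_coe, if_neg hden, rotation_coe]
  congr 1
  rw [mul_div_assoc]

lemma angle_exists (u : ℂ) (hu : ‖u‖ = 1) :
    ∃ φ ∈ Ico 0 (2*π), Complex.exp (φ * Complex.I) = u := by
  have habs : ‖u‖ = 1 := hu
  have harg := Complex.arg_mem_Ioc u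
  have hexp : Complex.exp (u.arg * Complex.I) = u := by
    have := Complex.norm_mul_exp_arg_mul_I u
    rwa [habs, Complex.ofReal_one, one_mul] at this
  by_cases hneg : u.arg < 0
  · refine ⟨u.arg + 2*π, ⟨by linarith [harg.1, Real.pi_pos], by linarith [Real.pi_pos]⟩, ?_⟩
    rw [show ((u.arg + 2*π : ℝ) : ℂ) * Complex.I = u.arg * Complex.I + 2*π*Complex.I by push_cast; ring,
      Complex.exp_add, Complex.exp_two_pi_mul_I, mul_one, hexp]
  · exact ⟨u.arg, ⟨le_of_not_gt hneg, by linarith [harg.2, Real.pi_pos]⟩, hexp⟩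

lemma angle_unique {φ φ' : ℝ} (h1 : φ ∈ Ico 0 (2*π)) (h2 : φ' ∈ Ico 0 (2*π))
    (h : Complex.exp (φ * Complex.I) = Complex.exp (φ' * Complex.I)) : φ = φ' := by
  rw [Complex.exp_eq_exp_iff_exists_int] at h
  obtain ⟨n, hn⟩ := h
  have h3 : ((φ - φ' - n * (2*π) : ℝ) : ℂ) * Complex.I = 0 := by push_cast; linear_combination hn
  have h4 : φ - φ' - n * (2*π) = 0 := by
    rcases mul_eq_zero.mp h3 with h5 | h5
    · exact_mod_cast h5
    · exact absurd h5 Complex.I_ne_zero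
  have hl : (-1 : ℝ) < n := by nlinarith [h1.1, h1.2, h2.1, h2.2, Real.pi_pos]
  have hu : (n : ℝ) < 1 := by nlinarith [h1.1, h1.2, h2.1, h2.2, Real.pi_pos]
  have hn0 : n = 0 := by
    have a : (-1 : ℤ) < n := by exact_mod_cast hl
    have b : n < (1 : ℤ) := by exact_mod_cast hu
    omega
  rw [hn0] at h4; push_cast at h4; linarith

lemma existence (α β : ℂ) (h : ‖α‖ ^ 2 - ‖β‖ ^ 2 = 1) :
    ∃ φ₁ φ₂ r : ℝ, φ₁ ∈ Ico 0 (2 * π) ∧ φ₂ ∈ Ico 0 (2 * π) ∧ 1 ≤ r ∧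
      mobius α β ((starRingEnd ℂ) β) ((starRingEnd ℂ) α) =
        rotationMT φ₁ ∘ contractionMT r ∘ rotationMT φ₂ := by
  classical
  have hα1 : 1 ≤ ‖α‖ := by nlinarith [norm_nonneg α, norm_nonneg β, sq_nonneg (‖α‖ - 1)]
  have hα0 : α ≠ 0 := by
    intro h0; rw [h0, norm_zero] at hα1; linarith
  set ca : ℂ := (‖α‖ : ℂ) with hca_def
  set cb : ℂ := (‖β‖ : ℂ) with hcb_def
  have hca0 : ca ≠ 0 := by
    simp only [hca_def, ne_eq, Complex.ofReal_eq_zero]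
    intro h0; rw [h0] at hα1; linarith
  have hconjα : α * (starRingEnd ℂ) α = ca * ca := by
    rw [Complex.mul_conj]
    simp only [hca_def, Complex.normSq_eq_norm_sq]
    push_cast; ring
  have hconjβ : β * (starRingEnd ℂ) β = cb * cb := by
    rw [Complex.mul_conj]
    simp only [hcb_def, Complex.normSq_eq_norm_sq]
    push_cast; ring
  set l : ℂ := (starRingEnd ℂ) α / ca with hl_def
  have hconjα0 : (starRingEnd ℂ) α ≠ 0 := by simpa using hα0
  have hl0 : l ≠ 0 := div_ne_zero hconjα0 hca0
  have hln : ‖l‖ = 1 := by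
    rw [hl_def, norm_div, RCLike.norm_conj, hca_def, Complex.norm_real,
      Real.norm_of_nonneg (norm_nonneg α), div_self (by intro h0; rw [h0] at hα1; linarith)]
  set e2 : ℂ := if β = 0 then 1 else (starRingEnd ℂ) β / (l * cb) with he2_def
  have he2n : ‖e2‖ = 1 := by
    by_cases hβ : β = 0
    · simp [he2_def, hβ]
    · have hcb0 : cb ≠ 0 := by simpa [hcb_def] using hβ
      rw [he2_def, if_neg hβ, norm_div, RCLike.norm_conj, norm_mul, hln, one_mul,
        hcb_def, Complex.norm_real, Real.norm_of_nonneg (norm_nonneg β),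
        div_self (by simpa using hβ)]
  have he20 : e2 ≠ 0 := by intro h0; rw [h0, norm_zero] at he2n; norm_num at he2n
  set e1 : ℂ := α / (l * e2 * ca) with he1_def
  have he1n : ‖e1‖ = 1 := by
    rw [he1_def, norm_div, norm_mul, norm_mul, hln, he2n, one_mul, one_mul,
      hca_def, Complex.norm_real, Real.norm_of_nonneg (norm_nonneg α),
      div_self (by intro h0; rw [h0] at hα1; linarith)]
  have he10 : e1 ≠ 0 := by intro h0; rw [h0, norm_zero] at he1n; norm_num at he1n
  have I1 : (starRingEnd ℂ) α = l * ca := by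
    rw [hl_def, div_mul_cancel₀ _ hca0]
  have I2 : (starRingEnd ℂ) β = l * e2 * cb := by
    by_cases hβ : β = 0
    · simp [hβ, hcb_def, map_zero]
    · have hcb0 : cb ≠ 0 := by simpa [hcb_def] using hβ
      rw [he2_def, if_neg hβ]; field_simp
  have I4 : α = l * e1 * e2 * ca := by
    rw [he1_def]; field_simp
  clear_value ca cb l e2 e1
  have I3 : β = l * e1 * cb := by
    by_cases hβ : β = 0
    · simp [hβ, hcb_def]
    · have hcb0 : cb ≠ 0 := by simpa [hcb_def] using hβ
      have k1 : β * (l * e2) = cb := by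
        apply mul_right_cancel₀ hcb0
        linear_combination hconjβ - β * I2
      have k2 : l * l * e1 * e2 = 1 := by
        apply mul_right_cancel₀ (mul_ne_zero hca0 hca0)
        linear_combination (-α) * I1 + hconjα + (-(l * ca)) * I4
      linear_combination (l * e1) * k1 - β * k2
  -- the r
  set r : ℝ := ‖α‖ + ‖β‖ with hr_def
  have hr1 : 1 ≤ r := by rw [hr_def]; nlinarith [norm_nonneg β]
  have hr0 : r ≠ 0 := by intro h0; rw [h0] at hr1; linarith
  have h1r : 1/r = ‖α‖ - ‖β‖ := by
    rw [eq_comm, eq_div_iff hr0, hr_def]; nlinarith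
  have hA : (1/2) * (r + 1/r) = ‖α‖ := by rw [h1r, hr_def]; ring
  have hB : (1/2) * (r - 1/r) = ‖β‖ := by rw [h1r, hr_def]; ring
  -- the angles
  obtain ⟨φ₁, hφ₁m, hφ₁⟩ := angle_exists e1 he1n
  obtain ⟨φ₂, hφ₂m, hφ₂⟩ := angle_exists e2 he2n
  refine ⟨φ₁, φ₂, r, hφ₁m, hφ₂m, hr1, ?_⟩
  have hcon : contractionMT r = mobius ca cb cb ca := by
    rw [contractionMT, hA, hB, ← hca_def, ← hcb_def]
  have hrot1 : rotationMT φ₁ = mobius e1 0 0 1 := by rw [rotationMT, hφ₁]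
  have hrot2 : rotationMT φ₂ = mobius e2 0 0 1 := by rw [rotationMT, hφ₂]
  rw [hcon, hrot1, hrot2]
  funext z
  cases z with
  | infty =>
    simp only [Function.comp_apply]
    rw [mobius_infty, mobius_infty, if_pos rfl, mobius_infty]
    by_cases hβ : β = 0
    · have hcb0 : cb = 0 := by simp [hcb_def, hβ]
      rw [if_pos (by simp [hβ]), if_pos hcb0, mobius_infty, if_pos rfl]
    · have hcb0 : cb ≠ 0 := by simpa [hcb_def] using hβ
      have hcβ0 : (starRingEnd ℂ) β ≠ 0 := by simpa using hβ
      rw [if_neg hcβ0, if_neg hcb0, mobius_coe, if_neg (by simp)]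
      congr 1
      have h5 : (e1 * (ca / cb) + 0) / (0 * (ca / cb) + 1) = (e1 * ca) / cb := by ring
      rw [h5, div_eq_div_iff hcβ0 hcb0]
      linear_combination cb * I4 - e1 * ca * I2
  | coe w =>
    simp only [Function.comp_apply]
    rw [mobius_coe (a := e2), if_neg (by simp)]
    have hval : (e2 * w + 0) / (0 * w + 1) = e2 * w := by ring
    rw [hval, mobius_coe (a := ca), mobius_coe (a := α)]
    have hden_eq : (starRingEnd ℂ) β * w + (starRingEnd ℂ) α = l * (cb * (e2 * w) + ca) := by
      linear_combination w * I2 + I1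
    have hnum_eq : α * w + β = l * e1 * (ca * (e2 * w) + cb) := by
      linear_combination w * I4 + I3
    by_cases hz : cb * (e2 * w) + ca = 0
    · rw [if_pos hz, if_pos (by rw [hden_eq, hz, mul_zero]), mobius_infty, if_pos rfl]
    · have hne : (starRingEnd ℂ) β * w + (starRingEnd ℂ) α ≠ 0 := by
        rw [hden_eq]; exact mul_ne_zero hl0 hz
      rw [if_neg hz, if_neg hne, mobius_coe, if_neg (by simp)]
      congr 1
      rw [hden_eq, hnum_eq]
      field_simp
      ring

set_option maxHeartbeats 1000000 in
lemma uniq (α β : ℂ) (h : ‖α‖ ^ 2 - ‖β‖ ^ 2 = 1)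
    (hnrot : ¬ ∃ φ : ℝ, mobius α β ((starRingEnd ℂ) β) ((starRingEnd ℂ) α) = rotationMT φ)
    (φ₁ φ₂ r φ₁' φ₂' r' : ℝ)
    (m1 : φ₁ ∈ Ico 0 (2 * π)) (m2 : φ₂ ∈ Ico 0 (2 * π)) (hr : 1 ≤ r)
    (m1' : φ₁' ∈ Ico 0 (2 * π)) (m2' : φ₂' ∈ Ico 0 (2 * π)) (hr' : 1 ≤ r')
    (heq : mobius α β ((starRingEnd ℂ) β) ((starRingEnd ℂ) α) =
      rotationMT φ₁ ∘ contractionMT r ∘ rotationMT φ₂)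
    (heq' : mobius α β ((starRingEnd ℂ) β) ((starRingEnd ℂ) α) =
      rotationMT φ₁' ∘ contractionMT r' ∘ rotationMT φ₂') :
    φ₁ = φ₁' ∧ φ₂ = φ₂' ∧ r = r' := by
  have hα1 : 1 ≤ ‖α‖ := by nlinarith [norm_nonneg α, norm_nonneg β, sq_nonneg (‖α‖ - 1)]
  have hα0 : α ≠ 0 := by intro h0; rw [h0, norm_zero] at hα1; linarith
  have hconjα0 : (starRingEnd ℂ) α ≠ 0 := by simpa using hα0
  -- β ≠ 0
  have hβ : β ≠ 0 := by
    intro h0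
    subst h0
    refine hnrot ?_
    have hn1 : ‖α / (starRingEnd ℂ) α‖ = 1 := by
      rw [norm_div, RCLike.norm_conj, div_self (by positivity)]
    obtain ⟨φ, _, hφ⟩ := angle_exists _ hn1
    refine ⟨φ, ?_⟩
    funext z
    cases z with
    | infty =>
      rw [mobius_infty, if_pos (map_zero _), rotation_infty]
    | coe w =>
      rw [mobius_coe, rotation_coe, hφ]
      rw [if_neg (by simpa using hconjα0)]
      congr 1
      simp only [map_zero, mul_zero, zero_mul, add_zero, zero_add]; ring
  -- evaluate at 0
  have hF0 : mobius α β ((starRingEnd ℂ) β) ((starRingEnd ℂ) α) ((0:ℂ) : OnePoint ℂ) =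
      ((β / (starRingEnd ℂ) α : ℂ) : OnePoint ℂ) := by
    rw [mobius_coe, if_neg (by simpa using hconjα0)]
    norm_num
  have key0 : ∀ (ψ₁ ψ₂ s : ℝ), 1 ≤ s →
      mobius α β ((starRingEnd ℂ) β) ((starRingEnd ℂ) α) =
        rotationMT ψ₁ ∘ contractionMT s ∘ rotationMT ψ₂ →
      β / (starRingEnd ℂ) α =
        Complex.exp (ψ₁ * Complex.I) * ((((1/2) * (s - 1/s) : ℝ) : ℂ) / (((1/2) * (s + 1/s) : ℝ) : ℂ)) := by
    intro ψ₁ ψ₂ s hs hE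
    have := congrFun hE (((0:ℂ)) : OnePoint ℂ)
    rw [hF0, comp_eval ψ₁ ψ₂ s hs 0 (by norm_num)] at this
    have h2 := OnePoint.coe_eq_coe.mp this
    rw [h2, mul_div_assoc]
    norm_num
  have E1 := key0 φ₁ φ₂ r hr heq
  have E2 := key0 φ₁' φ₂' r' hr' heq'
  -- norms give the ratio
  have keyn : ∀ (ψ₁ : ℝ) (s : ℝ), 1 ≤ s →
      β / (starRingEnd ℂ) α =
        Complex.exp (ψ₁ * Complex.I) * ((((1/2) * (s - 1/s) : ℝ) : ℂ) / (((1/2) * (s + 1/s) : ℝ) : ℂ)) →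
      ‖β‖ / ‖α‖ = ((1/2) * (s - 1/s)) / ((1/2) * (s + 1/s)) := by
    intro ψ₁ s hs hE
    obtain ⟨hb, hba⟩ := r_facts hs
    have := congrArg norm hE
    rwa [norm_div, RCLike.norm_conj, norm_mul, norm_exp_I, one_mul, norm_div,
      Complex.norm_real, Complex.norm_real, Real.norm_of_nonneg hb,
      Real.norm_of_nonneg (le_of_lt (lt_of_le_of_lt hb hba))] at this
  have N1 := keyn φ₁ r hr E1
  have N2 := keyn φ₁' r' hr' E2
  have hq : ((1/2) * (r - 1/r)) / ((1/2) * (r + 1/r))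
      = ((1/2) * (r' - 1/r')) / ((1/2) * (r' + 1/r')) := by rw [← N1, ← N2]
  -- r = r'
  have hr0 : (0:ℝ) < r := lt_of_lt_of_le one_pos hr
  have hr0' : (0:ℝ) < r' := lt_of_lt_of_le one_pos hr'
  have hrr : r = r' := by
    obtain ⟨hb1, hba1⟩ := r_facts hr
    obtain ⟨hb2, hba2⟩ := r_facts hr'
    have hA1 : (0:ℝ) < (1/2) * (r + 1/r) := lt_of_le_of_lt hb1 hba1
    have hA2 : (0:ℝ) < (1/2) * (r' + 1/r') := lt_of_le_of_lt hb2 hba2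
    rw [div_eq_div_iff (ne_of_gt hA1) (ne_of_gt hA2)] at hq
    have hsq : r^2 = r'^2 := by
      field_simp at hq
      nlinarith [mul_pos hr0 hr0']
    nlinarith
  subst hrr
  -- B ≠ 0
  have hβn : 0 < ‖β‖ := norm_pos_iff.mpr hβ
  have hBpos : 0 < (1/2) * (r - 1/r) := by
    obtain ⟨hb1, hba1⟩ := r_facts hr
    have hA1 : (0:ℝ) < (1/2) * (r + 1/r) := lt_of_le_of_lt hb1 hba1
    rcases lt_or_eq_of_le hb1 with h5 | h5
    · exact h5
    · exfalso
      rw [← h5] at N1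
      rw [zero_div] at N1
      have := div_pos hβn (lt_of_lt_of_le one_pos hα1)
      rw [N1] at this
      exact lt_irrefl 0 this
  -- φ₁ = φ₁'
  have hBA0 : ((((1/2) * (r - 1/r) : ℝ)) : ℂ) / (((1/2) * (r + 1/r) : ℝ) : ℂ) ≠ 0 := by
    obtain ⟨hb1, hba1⟩ := r_facts hr
    have hA1 : (0:ℝ) < (1/2) * (r + 1/r) := lt_of_le_of_lt hb1 hba1
    exact div_ne_zero (by exact_mod_cast ne_of_gt hBpos) (by exact_mod_cast ne_of_gt hA1)
  have hee : Complex.exp (φ₁ * Complex.I) = Complex.exp (φ₁' * Complex.I) := by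
    apply mul_right_cancel₀ hBA0
    rw [← E1, ← E2]
  have hphi1 : φ₁ = φ₁' := angle_unique m1 m1' hee
  subst hphi1
  refine ⟨rfl, ?_, rfl⟩
  -- φ₂ = φ₂'
  set w : ℂ := (starRingEnd ℂ) (Complex.exp (φ₂ * Complex.I)) with hw_def
  have hwn : ‖w‖ = 1 := by rw [hw_def, RCLike.norm_conj, norm_exp_I]
  have hcc := congrFun (heq.symm.trans heq') (w : OnePoint ℂ)
  rw [comp_eval φ₁ φ₂ r hr w hwn.le, comp_eval φ₁ φ₂' r hr w hwn.le] at hcc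
  have hval := OnePoint.coe_eq_coe.mp hcc
  have hexp0 : Complex.exp (φ₁ * Complex.I) ≠ 0 := Complex.exp_ne_zero _
  rw [mul_div_assoc, mul_div_assoc] at hval
  have hval2 := mul_left_cancel₀ hexp0 hval
  -- e2 * w = 1
  have he2w : Complex.exp (φ₂ * Complex.I) * w = 1 := by
    rw [hw_def, Complex.mul_conj]
    have : Complex.normSq (Complex.exp (φ₂ * Complex.I)) = 1 := by
      rw [Complex.normSq_eq_norm_sq, norm_exp_I]; norm_num
    rw [this, Complex.ofReal_one]
  obtain ⟨hb1, hba1⟩ := r_facts hr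
  have hA1 : (0:ℝ) < (1/2) * (r + 1/r) := lt_of_le_of_lt hb1 hba1
  have hAB : ((((1/2) * (r + 1/r) : ℝ)) : ℂ) + (((1/2) * (r - 1/r) : ℝ) : ℂ) ≠ 0 := by
    rw [← Complex.ofReal_add]
    rw [Ne, Complex.ofReal_eq_zero]
    nlinarith
  have hL : ((((1/2) * (r + 1/r) : ℝ)) : ℂ) * (Complex.exp (φ₂ * Complex.I) * w)
      + (((1/2) * (r - 1/r) : ℝ) : ℂ) = (((1/2) * (r + 1/r) : ℝ) : ℂ) + (((1/2) * (r - 1/r) : ℝ) : ℂ) := by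
    rw [he2w, mul_one]
  have hL2 : ((((1/2) * (r - 1/r) : ℝ)) : ℂ) * (Complex.exp (φ₂ * Complex.I) * w)
      + (((1/2) * (r + 1/r) : ℝ) : ℂ) = (((1/2) * (r - 1/r) : ℝ) : ℂ) + (((1/2) * (r + 1/r) : ℝ) : ℂ) := by
    rw [he2w, mul_one]
  rw [hL, hL2] at hval2
  have hone : ((((1/2) * (r + 1/r) : ℝ)) : ℂ) + (((1/2) * (r - 1/r) : ℝ) : ℂ) =
      ((((1/2) * (r - 1/r) : ℝ)) : ℂ) + (((1/2) * (r + 1/r) : ℝ) : ℂ) := by ring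
  rw [hone, div_self (by rw [← hone]; exact hAB)] at hval2
  -- denominator of RHS nonzero
  have hu'n : ‖Complex.exp (φ₂' * Complex.I) * w‖ ≤ 1 := by
    rw [norm_mul, norm_exp_I, one_mul, hwn]
  have hden' := den_ne hb1 hba1 _ hu'n
  have hcross := (div_eq_one_iff_eq hden').mp hval2.symm
  have hABne : ((((1/2) * (r + 1/r) : ℝ)) : ℂ) - (((1/2) * (r - 1/r) : ℝ) : ℂ) ≠ 0 := by
    rw [← Complex.ofReal_sub, Ne, Complex.ofReal_eq_zero]
    nlinarith
  have hu1 : Complex.exp (φ₂' * Complex.I) * w = 1 := by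
    have hfac : ((((1/2) * (r + 1/r) : ℝ) : ℂ) - (((1/2) * (r - 1/r) : ℝ) : ℂ))
        * (Complex.exp (φ₂' * Complex.I) * w - 1) = 0 := by linear_combination hcross
    rcases mul_eq_zero.mp hfac with h5 | h5
    · exact absurd h5 hABne
    · linear_combination h5
  have hfin : Complex.exp (φ₂ * Complex.I) = Complex.exp (φ₂' * Complex.I) := by
    have h6 : Complex.exp (φ₂' * Complex.I) * w * Complex.exp (φ₂ * Complex.I)
        = 1 * Complex.exp (φ₂ * Complex.I) := by rw [hu1]
    rw [one_mul] at h6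
    rw [← h6, hw_def]
    have h7 : (starRingEnd ℂ) (Complex.exp (φ₂ * Complex.I)) * Complex.exp (φ₂ * Complex.I) = 1 := by
      rw [mul_comm]; exact he2w
    rw [mul_assoc, h7, mul_one]
  exact angle_unique m2 m2' hfin

/-- every disc preserving Möbius transformation `F` decomposes as
`R_{φ₁} ∘ C_r ∘ R_{φ₂}`, uniquely (with `φᵢ` taken mod `2π`, i.e. in `[0, 2π)`, and `r ≥ 1`)
if `F` is not a rotation. -/
theorem stmt_1 (α β : ℂ) (h : ‖α‖ ^ 2 - ‖β‖ ^ 2 = 1) :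
    (∃ φ₁ φ₂ r : ℝ, φ₁ ∈ Ico 0 (2 * π) ∧ φ₂ ∈ Ico 0 (2 * π) ∧ 1 ≤ r ∧
      mobius α β ((starRingEnd ℂ) β) ((starRingEnd ℂ) α) =
        rotationMT φ₁ ∘ contractionMT r ∘ rotationMT φ₂) ∧
    ((¬ ∃ φ : ℝ, mobius α β ((starRingEnd ℂ) β) ((starRingEnd ℂ) α) = rotationMT φ) →
      ∀ φ₁ φ₂ r φ₁' φ₂' r' : ℝ,
        φ₁ ∈ Ico 0 (2 * π) → φ₂ ∈ Ico 0 (2 * π) → 1 ≤ r →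
        φ₁' ∈ Ico 0 (2 * π) → φ₂' ∈ Ico 0 (2 * π) → 1 ≤ r' →
        mobius α β ((starRingEnd ℂ) β) ((starRingEnd ℂ) α) =
          rotationMT φ₁ ∘ contractionMT r ∘ rotationMT φ₂ →
        mobius α β ((starRingEnd ℂ) β) ((starRingEnd ℂ) α) =
          rotationMT φ₁' ∘ contractionMT r' ∘ rotationMT φ₂' →
        φ₁ = φ₁' ∧ φ₂ = φ₂' ∧ r = r') := by
  constructor
  · exact existence α β h
  · intro hnrot φ₁ φ₂ r φ₁' φ₂' r' m1 m2 hr m1' m2' hr' heq heq'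
    exact uniq α β h hnrot φ₁ φ₂ r φ₁' φ₂' r' m1 m2 hr m1' m2' hr' heq heq'
end

section
/- Let {F_n} be a sequence of disc preserving Möbius transformations. If there exists a point z in the open unit disc such that F_n(z) → x ∈ 𝕋, then for every point w in the open unit disc, F_n(w) → x. (Equivalently, convergence of the orbit of one interior point to a boundary point forces convergence of all interior orbits to the same boundary point.) -/
open Complex Filter Topology

/-- The disc preserving Möbius transformation with normalized matrix
`[[α, β], [conj β, conj α]]`, as a map of `ℂ`. -/
noncomputable def discMT (α β : ℂ) : ℂ → ℂ :=
  fun z => (α * z + β) / ((starRingEnd ℂ) β * z + (starRingEnd ℂ) α)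

private lemma alpha_facts {α β : ℂ} (hn : ‖α‖ ^ 2 - ‖β‖ ^ 2 = 1) :
    1 ≤ ‖α‖ ∧ ‖β‖ ≤ ‖α‖ := by
  constructor
  · nlinarith [norm_nonneg α, norm_nonneg β, sq_nonneg ‖β‖]
  · nlinarith [norm_nonneg α, norm_nonneg β]

private lemma D_lower {α β : ℂ} (hn : ‖α‖ ^ 2 - ‖β‖ ^ 2 = 1) {u : ℂ} (hu : ‖u‖ < 1) :
    ‖α‖ * (1 - ‖u‖) ≤ ‖(starRingEnd ℂ) β * u + (starRingEnd ℂ) α‖ := by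
  obtain ⟨h1, h2⟩ := alpha_facts hn
  have h3 : ‖(starRingEnd ℂ) α‖ - ‖-((starRingEnd ℂ) β * u)‖ ≤
      ‖(starRingEnd ℂ) α - (-((starRingEnd ℂ) β * u))‖ := norm_sub_norm_le _ _
  simp only [norm_neg, sub_neg_eq_add, norm_mul, RingHomIsometric.norm_map] at h3
  have hb : ‖β‖ * ‖u‖ ≤ ‖α‖ * ‖u‖ := by
    apply mul_le_mul_of_nonneg_right h2 (norm_nonneg u)
  calc ‖α‖ * (1 - ‖u‖) = ‖α‖ - ‖α‖ * ‖u‖ := by ring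
    _ ≤ ‖α‖ - ‖β‖ * ‖u‖ := by linarith
    _ ≤ ‖(starRingEnd ℂ) α + (starRingEnd ℂ) β * u‖ := h3
    _ = ‖(starRingEnd ℂ) β * u + (starRingEnd ℂ) α‖ := by rw [add_comm]

private lemma D_upper (α β : ℂ) {u : ℂ} (hu : ‖u‖ < 1) (h2 : ‖β‖ ≤ ‖α‖) :
    ‖(starRingEnd ℂ) β * u + (starRingEnd ℂ) α‖ ≤ ‖α‖ * (1 + ‖u‖) := by
  calc ‖(starRingEnd ℂ) β * u + (starRingEnd ℂ) α‖
      ≤ ‖(starRingEnd ℂ) β * u‖ + ‖(starRingEnd ℂ) α‖ := norm_add_le _ _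
    _ = ‖β‖ * ‖u‖ + ‖α‖ := by simp [norm_mul]
    _ ≤ ‖α‖ * ‖u‖ + ‖α‖ := by
        have := mul_le_mul_of_nonneg_right h2 (norm_nonneg u); linarith
    _ = ‖α‖ * (1 + ‖u‖) := by ring

private lemma key_id {α β : ℂ} (hn : ‖α‖ ^ 2 - ‖β‖ ^ 2 = 1) {w z : ℂ}
    (hw : (starRingEnd ℂ) β * w + (starRingEnd ℂ) α ≠ 0)
    (hz : (starRingEnd ℂ) β * z + (starRingEnd ℂ) α ≠ 0) :
    discMT α β w - discMT α β z =
      (w - z) / (((starRingEnd ℂ) β * w + (starRingEnd ℂ) α) *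
        ((starRingEnd ℂ) β * z + (starRingEnd ℂ) α)) := by
  have h1 : α * (starRingEnd ℂ) α - β * (starRingEnd ℂ) β = 1 := by
    have hn' := hn
    rw [Complex.mul_conj, Complex.mul_conj, Complex.normSq_eq_norm_sq, Complex.normSq_eq_norm_sq]
    exact_mod_cast hn'
  unfold discMT
  rw [div_sub_div _ _ hw hz]
  rw [div_eq_div_iff (mul_ne_zero hw hz) (mul_ne_zero hw hz)]
  linear_combination ((starRingEnd ℂ) β * w + (starRingEnd ℂ) α) *
    ((starRingEnd ℂ) β * z + (starRingEnd ℂ) α) * (w - z) * h1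

private lemma norm_id (α β z : ℂ) :
    ‖(starRingEnd ℂ) β * z + (starRingEnd ℂ) α‖ ^ 2 - ‖α * z + β‖ ^ 2 =
      (‖α‖ ^ 2 - ‖β‖ ^ 2) * (1 - ‖z‖ ^ 2) := by
  have e : ∀ u : ℂ, ‖u‖ ^ 2 = Complex.normSq u := fun u => by
    rw [Complex.sq_norm]
  rw [e, e, e, e, e]
  simp only [Complex.normSq_apply, Complex.add_re, Complex.add_im, Complex.mul_re,
    Complex.mul_im, Complex.conj_re, Complex.conj_im]
  ring

/-- if for a sequence of disc preserving Möbius transformations `Fₙ` there is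
some `z` in the open unit disc with `Fₙ(z) → x ∈ 𝕋`, then `Fₙ(w) → x` for every `w` in the
open unit disc. -/
theorem stmt_11 (α β : ℕ → ℂ) (hn : ∀ n, ‖α n‖ ^ 2 - ‖β n‖ ^ 2 = 1)
    (x : ℂ) (hx : ‖x‖ = 1)
    (h : ∃ z : ℂ, ‖z‖ < 1 ∧ Tendsto (fun n => discMT (α n) (β n) z) atTop (𝓝 x)) :
    ∀ w : ℂ, ‖w‖ < 1 → Tendsto (fun n => discMT (α n) (β n) w) atTop (𝓝 x) := by
  obtain ⟨z, hz, htz⟩ := h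
  intro w hw
  set F : ℕ → ℂ → ℂ := fun n => discMT (α n) (β n) with hF
  set Dz : ℕ → ℂ := fun n => (starRingEnd ℂ) (β n) * z + (starRingEnd ℂ) (α n) with hDz
  set Dw : ℕ → ℂ := fun n => (starRingEnd ℂ) (β n) * w + (starRingEnd ℂ) (α n) with hDw
  have hz1 : (0:ℝ) < 1 - ‖z‖ := by linarith
  have hw1 : (0:ℝ) < 1 - ‖w‖ := by linarith
  have hz2 : (0:ℝ) < 1 - ‖z‖ ^ 2 := by nlinarith [norm_nonneg z]
  have hA : ∀ n, 1 ≤ ‖α n‖ := fun n => (alpha_facts (hn n)).1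
  have hBA : ∀ n, ‖β n‖ ≤ ‖α n‖ := fun n => (alpha_facts (hn n)).2
  have hDzlow : ∀ n, ‖α n‖ * (1 - ‖z‖) ≤ ‖Dz n‖ := fun n => D_lower (hn n) hz
  have hDwlow : ∀ n, ‖α n‖ * (1 - ‖w‖) ≤ ‖Dw n‖ := fun n => D_lower (hn n) hw
  have hDzpos : ∀ n, 0 < ‖Dz n‖ := fun n =>
    lt_of_lt_of_le (by nlinarith [hA n]) (hDzlow n)
  have hDwpos : ∀ n, 0 < ‖Dw n‖ := fun n =>
    lt_of_lt_of_le (by nlinarith [hA n]) (hDwlow n)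
  have hDzne : ∀ n, Dz n ≠ 0 := fun n => norm_pos_iff.mp (hDzpos n)
  have hDwne : ∀ n, Dw n ≠ 0 := fun n => norm_pos_iff.mp (hDwpos n)
  have hDzup : ∀ n, ‖Dz n‖ ≤ ‖α n‖ * (1 + ‖z‖) := fun n => D_upper _ _ hz (hBA n)
  -- norm identity: ‖Dz n‖² (1 - ‖F n z‖²) = 1 - ‖z‖²
  have hkey : ∀ n, ‖Dz n‖ ^ 2 * (1 - ‖F n z‖ ^ 2) = 1 - ‖z‖ ^ 2 := by
    intro n
    have hid := norm_id (α n) (β n) z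
    rw [hn n, one_mul] at hid
    have : ‖F n z‖ = ‖α n * z + β n‖ / ‖Dz n‖ := by
      simp only [hF, hDz, discMT, norm_div]
    have h2 : ‖Dz n‖ ^ 2 ≠ 0 := pow_ne_zero 2 (hDzpos n).ne'
    rw [this, div_pow, mul_sub, mul_one, mul_div_cancel₀ _ h2]
    linarith [hid]
  -- convergence of norms
  have hnorm : Tendsto (fun n => ‖F n z‖) atTop (𝓝 1) := by
    have := htz.norm
    rwa [hx] at this
  set C : ℝ := ‖w - z‖ * (1 + ‖z‖) / ((1 - ‖w‖) * (1 - ‖z‖ ^ 2)) with hC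
  have hCnn : 0 ≤ C := by
    apply div_nonneg
    · positivity
    · positivity
  have hg : Tendsto (fun n => C * (1 - ‖F n z‖ ^ 2)) atTop (𝓝 0) := by
    have : Tendsto (fun n => C * (1 - ‖F n z‖ ^ 2)) atTop (𝓝 (C * (1 - 1 ^ 2))) :=
      tendsto_const_nhds.mul (tendsto_const_nhds.sub (hnorm.pow 2))
    simpa using this
  -- the correction term tends to 0
  have hcorr : Tendsto (fun n => (w - z) / (Dw n * Dz n)) atTop (𝓝 0) := by
    rw [tendsto_zero_iff_norm_tendsto_zero]
    apply squeeze_zero (fun n => norm_nonneg _) _ hg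
    intro n
    have ha := hDzpos n
    have hb := hDwpos n
    have hab : (1 - ‖w‖) * ‖Dz n‖ ≤ (1 + ‖z‖) * ‖Dw n‖ := by
      have h1 := hDzup n
      have h2 := hDwlow n
      nlinarith [norm_nonneg (α n), hA n]
    have hCpos : (0:ℝ) < (1 - ‖w‖) * (1 - ‖z‖ ^ 2) := by positivity
    rw [norm_div, norm_mul, div_le_iff₀ (mul_pos hb ha), hC, div_mul_eq_mul_div,
      div_mul_eq_mul_div, le_div_iff₀ hCpos]
    have h5 : ‖w - z‖ * (1 - ‖z‖ ^ 2) * ((1 - ‖w‖) * ‖Dz n‖) ≤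
        ‖w - z‖ * (1 - ‖z‖ ^ 2) * ((1 + ‖z‖) * ‖Dw n‖) :=
      mul_le_mul_of_nonneg_left hab (by positivity)
    have e2 : ‖w - z‖ * (1 + ‖z‖) * (1 - ‖F n z‖ ^ 2) * (‖Dw n‖ * ‖Dz n‖) * ‖Dz n‖ =
        ‖w - z‖ * (1 + ‖z‖) * ‖Dw n‖ * (‖Dz n‖ ^ 2 * (1 - ‖F n z‖ ^ 2)) := by ring
    rw [hkey n] at e2
    have hmul : ‖w - z‖ * ((1 - ‖w‖) * (1 - ‖z‖ ^ 2)) * ‖Dz n‖ ≤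
        ‖w - z‖ * (1 + ‖z‖) * (1 - ‖F n z‖ ^ 2) * (‖Dw n‖ * ‖Dz n‖) * ‖Dz n‖ := by
      rw [e2]
      calc ‖w - z‖ * ((1 - ‖w‖) * (1 - ‖z‖ ^ 2)) * ‖Dz n‖
          = ‖w - z‖ * (1 - ‖z‖ ^ 2) * ((1 - ‖w‖) * ‖Dz n‖) := by ring
        _ ≤ ‖w - z‖ * (1 - ‖z‖ ^ 2) * ((1 + ‖z‖) * ‖Dw n‖) := h5
        _ = ‖w - z‖ * (1 + ‖z‖) * ‖Dw n‖ * (1 - ‖z‖ ^ 2) := by ring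
    exact le_of_mul_le_mul_right hmul ha
  -- conclude
  have heq : ∀ n, F n w = F n z + (w - z) / (Dw n * Dz n) := fun n =>
    eq_add_of_sub_eq' (key_id (hn n) (hDwne n) (hDzne n))
  have hfin : Tendsto (fun n => F n z + (w - z) / (Dw n * Dz n)) atTop (𝓝 (x + 0)) :=
    htz.add hcorr
  rw [add_zero] at hfin
  exact hfin.congr (fun n => (heq n).symm)
end

section
/- Let {F_n} be a sequence of disc preserving Möbius transformations with normalized matrices [[α_n,β_n],[conj β_n, conj α_n]], |α_n|²−|β_n|²=1, and let x₀ ∈ 𝕋. If |(F_n⁻¹)'(x₀)| = 1/|−conj(β_n)x₀ + α_n|² → ∞ as n → ∞, then α_n/conj(β_n) → x₀ (i.e. the sequence represents x₀). -/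
open Complex Filter Topology

/-- for a sequence of disc preserving Möbius transformations with normalized
matrices `[[αₙ, βₙ], [conj βₙ, conj αₙ]]` and `x₀` on the unit circle, if
`|(Fₙ⁻¹)'(x₀)| = 1/|−conj βₙ · x₀ + αₙ|² → ∞`, then `dₙ = αₙ/conj βₙ → x₀`
(the sequence represents `x₀`). -/
theorem stmt_14 (α β : ℕ → ℂ) (hn : ∀ n, ‖α n‖ ^ 2 - ‖β n‖ ^ 2 = 1)
    (x₀ : ℂ) (hx : ‖x₀‖ = 1)
    (h : Tendsto (fun n => 1 / ‖-(starRingEnd ℂ) (β n) * x₀ + α n‖ ^ 2) atTop atTop) :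
    Tendsto (fun n => α n / (starRingEnd ℂ) (β n)) atTop (𝓝 x₀) := by
  set c : ℕ → ℂ := fun n => -(starRingEnd ℂ) (β n) * x₀ + α n with hc_def
  have hc2 : Tendsto (fun n => ‖c n‖ ^ 2) atTop (𝓝 0) := by
    have h0 : Tendsto (fun n => ((1:ℝ) / ‖c n‖ ^ 2)⁻¹) atTop (𝓝 0) := h.inv_tendsto_atTop
    simpa [one_div, inv_inv] using h0
  have hc : Tendsto (fun n => ‖c n‖) atTop (𝓝 0) := by
    have h0 : Tendsto (fun n => Real.sqrt (‖c n‖ ^ 2)) atTop (𝓝 (Real.sqrt 0)) :=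
      (Real.continuous_sqrt.tendsto 0).comp hc2
    simpa [Real.sqrt_sq (norm_nonneg _)] using h0
  have key : ∀ n, ‖c n‖ ≤ 1 / 2 →
      ‖α n / (starRingEnd ℂ) (β n) - x₀‖ ≤ 8 / 3 * ‖c n‖ ^ 2 := by
    intro n hsmall
    have hα : α n = (starRingEnd ℂ) (β n) * x₀ + c n := by
      simp only [hc_def]; ring
    have hna : ‖α n‖ ≤ ‖β n‖ + ‖c n‖ := by
      calc ‖α n‖ = ‖(starRingEnd ℂ) (β n) * x₀ + c n‖ := by rw [← hα]
        _ ≤ ‖(starRingEnd ℂ) (β n) * x₀‖ + ‖c n‖ := norm_add_le _ _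
        _ = ‖β n‖ + ‖c n‖ := by rw [norm_mul, hx, RCLike.norm_conj, mul_one]
    have hsq : 1 + ‖β n‖ ^ 2 ≤ (‖β n‖ + ‖c n‖) ^ 2 := by
      have h1 : ‖α n‖ ^ 2 ≤ (‖β n‖ + ‖c n‖) ^ 2 := by
        apply pow_le_pow_left₀ (norm_nonneg _) hna
      have := hn n
      linarith
    have he : 3 ≤ 8 * ‖β n‖ * ‖c n‖ := by nlinarith [norm_nonneg (c n), norm_nonneg (β n)]
    have hbpos : 0 < ‖β n‖ := by nlinarith [norm_nonneg (c n), norm_nonneg (β n)]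
    have hbne : (starRingEnd ℂ) (β n) ≠ 0 := by
      simp only [ne_eq, map_eq_zero]
      intro h0
      rw [h0, norm_zero] at hbpos
      exact lt_irrefl 0 hbpos
    have heq : α n / (starRingEnd ℂ) (β n) - x₀ = c n / (starRingEnd ℂ) (β n) := by
      field_simp [hc_def]
      ring
    rw [heq, norm_div, RCLike.norm_conj]
    rw [div_le_iff₀ hbpos]
    nlinarith [norm_nonneg (c n), norm_nonneg (β n)]
  rw [tendsto_iff_norm_sub_tendsto_zero]
  have hupper : Tendsto (fun n => 8 / 3 * ‖c n‖ ^ 2) atTop (𝓝 0) := by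
    simpa using hc2.const_mul (8 / 3 : ℝ)
  apply tendsto_of_tendsto_of_tendsto_of_le_of_le' tendsto_const_nhds hupper
  · exact Eventually.of_forall fun n => norm_nonneg _
  · filter_upwards [hc.eventually (ge_mem_nhds (by norm_num : (0:ℝ) < 1/2))] with n hn2
    exact key n hn2
end

section
/- Let I₁,…,I_k be open arcs on the circle 𝕋. A point x belongs to the closure of I₁ ∩ … ∩ I_k if and only if (a) x belongs to the closure of each I_i, and (b) there are no indices i, j such that x is the counterclockwise endpoint of I_i and the clockwise endpoint of I_j. -/
open Complex Real Set

/-- The open arc of the unit circle with clockwise endpoint `a`, going counterclockwise for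
angular length `l`; its counterclockwise endpoint is `a·e^{il}`. -/
def openArc (a : ℂ) (l : ℝ) : Set ℂ :=
  (fun θ : ℝ => a * Complex.exp (θ * Complex.I)) '' Ioo 0 l

lemma arc_cont (a : ℂ) : Continuous fun θ : ℝ => a * Complex.exp (θ * Complex.I) :=
  continuous_const.mul (Complex.continuous_exp.comp (Complex.continuous_ofReal.mul continuous_const))

lemma expI_inj {θ φ : ℝ} :
    Complex.exp ((θ : ℂ) * Complex.I) = Complex.exp ((φ : ℂ) * Complex.I) ↔
      ∃ n : ℤ, θ = φ + n * (2 * π) := by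
  rw [Complex.exp_eq_exp_iff_exists_int]
  constructor
  · rintro ⟨n, h⟩
    refine ⟨n, ?_⟩
    have h2 : (θ : ℂ) = (φ : ℂ) + (n : ℂ) * (2 * (π : ℂ)) := by
      apply mul_right_cancel₀ Complex.I_ne_zero
      rw [h]; ring
    exact_mod_cast h2
  · rintro ⟨n, h⟩
    exact ⟨n, by rw [h]; push_cast; ring⟩

lemma closure_openArc_subset (a : ℂ) (l : ℝ) :
    closure (openArc a l) ⊆ (fun θ : ℝ => a * Complex.exp (θ * Complex.I)) '' Icc 0 l :=
  closure_minimal (Set.image_mono Ioo_subset_Icc_self)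
    ((isCompact_Icc.image (arc_cont a)).isClosed)

/-- a point `x` belongs to the closure of a finite intersection of open arcs
`I₁ ∩ … ∩ I_k` iff it belongs to the closure of each arc and there are no `i, j` such that
`x` is the counterclockwise endpoint of `I_i` and the clockwise endpoint of `I_j`. -/
theorem stmt_17 (k : ℕ) (a : Fin k → ℂ) (l : Fin k → ℝ)
    (ha : ∀ i, ‖a i‖ = 1) (hl : ∀ i, 0 < l i ∧ l i < 2 * π) (x : ℂ) :
    x ∈ closure (⋂ i, openArc (a i) (l i)) ↔
      ((∀ i, x ∈ closure (openArc (a i) (l i))) ∧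
        ¬ ∃ i j, x = a i * Complex.exp ((l i : ℂ) * Complex.I) ∧ x = a j) := by
  rcases Nat.eq_zero_or_pos k with hk | hk
  · subst hk
    simp
  haveI : Nonempty (Fin k) := ⟨⟨0, hk⟩⟩
  constructor
  · intro hx
    refine ⟨fun i => closure_mono (Set.iInter_subset _ i) hx, ?_⟩
    rintro ⟨i, j, hxi, hxj⟩
    have hx0 : x ≠ 0 := by
      rw [hxj]
      intro h
      have := ha j
      rw [h] at this
      simp at this
    have hai : a i ≠ 0 := by
      intro h
      have := ha i
      rw [h] at this
      simp at this
    have hx' : x ∈ closure (openArc (a i) (l i) ∩ openArc (a j) (l j)) :=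
      closure_mono (Set.subset_inter (Set.iInter_subset _ i) (Set.iInter_subset _ j)) hx
    set C : Set ℂ := (fun θ : ℝ => x * Complex.exp (θ * Complex.I)) '' Icc (2 * π - l i) (l j)
      with hC
    have hCclosed : IsClosed C := (isCompact_Icc.image (arc_cont x)).isClosed
    have hsub : openArc (a i) (l i) ∩ openArc (a j) (l j) ⊆ C := by
      rintro y ⟨⟨θ, hθ, hyi⟩, ⟨φ, hφ, hyj⟩⟩
      have hyy : a i * Complex.exp ((θ : ℂ) * Complex.I) = a j * Complex.exp ((φ : ℂ) * Complex.I) :=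
        hyi.trans hyj.symm
      rw [← hxj, hxi] at hyy
      have h3 : Complex.exp ((θ : ℂ) * Complex.I)
          = Complex.exp (((l i + φ : ℝ) : ℂ) * Complex.I) := by
        apply mul_left_cancel₀ hai
        rw [hyy]
        push_cast
        rw [add_mul, Complex.exp_add]
        ring
      obtain ⟨n, hn⟩ := expI_inj.mp h3
      have hn1 : n = -1 := by
        have hπ := Real.pi_pos
        have h4 : (n : ℝ) < 0 := by nlinarith [hθ.2, hφ.1]
        have h5 : (-2 : ℝ) < n := by nlinarith [hθ.1, hφ.2, (hl i).2, (hl j).2]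
        have h6 : n < 0 := by exact_mod_cast h4
        have h7 : (-2 : ℤ) < n := by exact_mod_cast h5
        omega
      refine ⟨φ, ⟨?_, hφ.2.le⟩, by rw [← hxj] at hyj; exact hyj⟩
      rw [hn1] at hn
      push_cast at hn
      linarith [hθ.1]
    have hxC : x ∈ C := closure_minimal hsub hCclosed hx'
    obtain ⟨φ, hφ, hφx⟩ := hxC
    have h1 : Complex.exp ((φ : ℂ) * Complex.I) = Complex.exp (((0 : ℝ) : ℂ) * Complex.I) := by
      have hφx' : x * Complex.exp ((φ : ℂ) * Complex.I) = x := hφx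
      apply mul_left_cancel₀ hx0
      rw [hφx']
      simp
    obtain ⟨n, hn⟩ := expI_inj.mp h1
    have hπ := Real.pi_pos
    have hφ1 : 0 < φ := by
      have := hφ.1
      have := (hl i).2
      linarith
    have hφ2 : φ < 2 * π := lt_of_le_of_lt hφ.2 (hl j).2
    have h4 : (0 : ℝ) < n := by nlinarith
    have h5 : (n : ℝ) < 1 := by nlinarith
    have h6 : (0 : ℤ) < n := by exact_mod_cast h4
    have h7 : n < 1 := by exact_mod_cast h5
    omega
  · rintro ⟨hcl, hne⟩
    choose θ hθmem hθeq using fun i => closure_openArc_subset (a i) (l i) (hcl i)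
    have hθeq' : ∀ i, a i * Complex.exp ((θ i : ℂ) * Complex.I) = x := hθeq
    by_cases hup : ∃ i, x = a i * Complex.exp ((l i : ℂ) * Complex.I)
    · -- x is a ccw endpoint of some arc; approach from the clockwise side
      have hdown : ∀ j, x ≠ a j := by
        intro j hj
        obtain ⟨i, hi⟩ := hup
        exact hne ⟨i, j, hi, hj⟩
      have hθpos : ∀ i, 0 < θ i := by
        intro i
        rcases eq_or_lt_of_le (hθmem i).1 with h | h
        · exfalso
          apply hdown i
          rw [← hθeq' i, ← h]
          simp
        · exact h
      set ε : ℝ := Finset.univ.inf' Finset.univ_nonempty θ with hε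
      have hεpos : 0 < ε := by
        rw [hε, Finset.lt_inf'_iff]
        intro i _
        exact hθpos i
      have hεle : ∀ i, ε ≤ θ i := fun i => Finset.inf'_le _ (Finset.mem_univ i)
      have hf : Filter.Tendsto (fun α : ℝ => x * Complex.exp ((α : ℂ) * Complex.I))
          (nhdsWithin 0 (Iio (0:ℝ))) (nhds x) := by
        have h1 := (arc_cont x).tendsto 0
        simp only [Complex.ofReal_zero, zero_mul, Complex.exp_zero, mul_one] at h1
        exact h1.mono_left nhdsWithin_le_nhds
      have hev : ∀ᶠ (α : ℝ) in nhdsWithin (0:ℝ) (Iio (0:ℝ)),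
          x * Complex.exp ((α : ℂ) * Complex.I) ∈ ⋂ i, openArc (a i) (l i) := by
        filter_upwards [Ioo_mem_nhdsLT_of_mem (⟨neg_lt_zero.mpr hεpos, le_refl (0:ℝ)⟩ :
          (0:ℝ) ∈ Ioc (-ε) 0)] with α hα
        rw [Set.mem_iInter]
        intro i
        refine ⟨θ i + α, ⟨?_, ?_⟩, ?_⟩
        · have := hεle i
          have := hα.1
          linarith
        · have := (hθmem i).2
          have := hα.2
          linarith
        · push_cast
          rw [add_mul, Complex.exp_add, ← mul_assoc, hθeq' i]
      exact mem_closure_of_tendsto hf hev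
    · -- x is not a ccw endpoint of any arc; approach from the counterclockwise side
      push_neg at hup
      have hθlt : ∀ i, θ i < l i := by
        intro i
        rcases eq_or_lt_of_le (hθmem i).2 with h | h
        · exfalso
          apply hup i
          rw [← hθeq' i, h]
        · exact h
      set ε : ℝ := Finset.univ.inf' Finset.univ_nonempty (fun i => l i - θ i) with hε
      have hεpos : 0 < ε := by
        rw [hε, Finset.lt_inf'_iff]
        intro i _
        have := hθlt i
        linarith
      have hεle : ∀ i, ε ≤ l i - θ i := fun i => Finset.inf'_le _ (Finset.mem_univ i)
      have hf : Filter.Tendsto (fun α : ℝ => x * Complex.exp ((α : ℂ) * Complex.I))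
          (nhdsWithin 0 (Ioi (0:ℝ))) (nhds x) := by
        have h1 := (arc_cont x).tendsto 0
        simp only [Complex.ofReal_zero, zero_mul, Complex.exp_zero, mul_one] at h1
        exact h1.mono_left nhdsWithin_le_nhds
      have hev : ∀ᶠ (α : ℝ) in nhdsWithin (0:ℝ) (Ioi (0:ℝ)),
          x * Complex.exp ((α : ℂ) * Complex.I) ∈ ⋂ i, openArc (a i) (l i) := by
        filter_upwards [Ioo_mem_nhdsGT_of_mem (⟨le_refl (0:ℝ), hεpos⟩ :
          (0:ℝ) ∈ Ico 0 ε)] with α hα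
        rw [Set.mem_iInter]
        intro i
        refine ⟨θ i + α, ⟨?_, ?_⟩, ?_⟩
        · have := (hθmem i).1
          have := hα.1
          linarith
        · have := hεle i
          have := hα.2
          linarith
        · push_cast
          rw [add_mul, Complex.exp_add, ← mul_assoc, hθeq' i]
      exact mem_closure_of_tendsto hf hev
end
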